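/- Let x ∈ X with p(x) ∈ ℝ. The following statements are equivalent: (i) ∂p(x) = C(x); (ii) reverse strong robust duality holds at every x* ∈ ∂p(x), i.e., for every x* ∈ ∂p(x) the infimum of p − x* over X is attained and p*(x*) = q(x*); (iii) robust duality holds at every x* ∈ ∂p(x), i.e., p*(x*) = q(x*) for every x* ∈ ∂p(x). Here C(x) := ⋂_{η>0} ⋃_{ε₁,ε₂≥0, ε₁+ε₂=η} ⋃_{u∈I^{ε₁}(x)} proj^u_{X*} ∂^{ε₂}F_u(x, 0_u). -/

import Mathlib

/-!
For `x* ∈ ∂p(x)` the Fenchel–Young inequality `⟨x*, x⟩ - p(x) ≤ p*(x*)` is an equality, and `x`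
minimizes `p - x*`. On the other side, `(x*, y*) ∈ ∂^{ε₂} F_u(x, 0)` with `u ∈ I^{ε₁}(x)` amounts,
up to redistributing `ε₁ + ε₂`, to `F_u*(x*, y*) ≤ ⟨x*, x⟩ - p(x) + ε₁ + ε₂`; hence
`C(x) = {x* | q(x*) ≤ ⟨x*, x⟩ - p(x)}`. Together with weak duality `p* ≤ q`, both (i) and (iii)
then say that `q(x*) = ⟨x*, x⟩ - p(x)` for every `x* ∈ ∂p(x)`.
-/

noncomputable section

namespace RobustDuality

/-- The set of `ε`-minimizers of an extended-real-valued function `h`: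
`{z | h z ∈ ℝ ∧ h z ≤ inf h + ε}` (empty when `inf h ∉ ℝ`). -/
def epsArgmin {Z : Type*} (h : Z → EReal) (ε : ℝ) : Set Z :=
  {z | (∃ r : ℝ, h z = (r : EReal)) ∧ h z ≤ (⨅ w, h w) + (ε : EReal)}

variable {X : Type*} [AddCommGroup X] [Module ℝ X] [TopologicalSpace X]
  [IsTopologicalAddGroup X] [ContinuousSMul ℝ X] [LocallyConvexSpace ℝ X] [T2Space X]

/-- `(M^ε h)(x*) := ε-argmin (h - x*)` for `h : X → EReal` and `x* ∈ X*`. -/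
def M1 (h : X → EReal) (ε : ℝ) (xs : X →L[ℝ] ℝ) : Set X :=
  epsArgmin (fun x => h x - ((xs x : ℝ) : EReal)) ε

/-- Fenchel conjugate of `h : X → EReal`. -/
def conj1 (h : X → EReal) (xs : X →L[ℝ] ℝ) : EReal :=
  ⨆ x : X, ((xs x : ℝ) : EReal) - h x

/-- `ε`-subdifferential of `h : X → EReal` at `a`. -/
def epsSubdiff1 (h : X → EReal) (ε : ℝ) (a : X) : Set (X →L[ℝ] ℝ) :=
  {xs | (∃ r : ℝ, h a = (r : EReal)) ∧
    ∀ x, h a + ((xs x - xs a - ε : ℝ) : EReal) ≤ h x}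

section Pair

variable {Yu : Type*} [AddCommGroup Yu] [Module ℝ Yu] [TopologicalSpace Yu]
  [IsTopologicalAddGroup Yu] [ContinuousSMul ℝ Yu] [LocallyConvexSpace ℝ Yu] [T2Space Yu]

/-- Fenchel conjugate of `F : X × Y → EReal` at `(x*, y*)`. -/
def conj2 (F : X × Yu → EReal) (xs : X →L[ℝ] ℝ) (ys : Yu →L[ℝ] ℝ) : EReal :=
  ⨆ z : X × Yu, ((xs z.1 + ys z.2 : ℝ) : EReal) - F z

/-- `(M^ε F)(x*, y*) := ε-argmin (F - (x*, y*))`. -/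
def M2 (F : X × Yu → EReal) (ε : ℝ) (xs : X →L[ℝ] ℝ) (ys : Yu →L[ℝ] ℝ) : Set (X × Yu) :=
  epsArgmin (fun z => F z - ((xs z.1 + ys z.2 : ℝ) : EReal)) ε

/-- `ε`-subdifferential of `F : X × Y → EReal` at `a`, as a set of dual pairs. -/
def epsSubdiff2 (F : X × Yu → EReal) (ε : ℝ) (a : X × Yu) :
    Set ((X →L[ℝ] ℝ) × (Yu →L[ℝ] ℝ)) :=
  {zs | (∃ r : ℝ, F a = (r : EReal)) ∧
    ∀ z, F a + ((zs.1 z.1 + zs.2 z.2 - zs.1 a.1 - zs.2 a.2 - ε : ℝ) : EReal) ≤ F z}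

end Pair

variable {U : Type*} {Y : U → Type*} [∀ u, AddCommGroup (Y u)] [∀ u, Module ℝ (Y u)]
  [∀ u, TopologicalSpace (Y u)] [∀ u, IsTopologicalAddGroup (Y u)]
  [∀ u, ContinuousSMul ℝ (Y u)] [∀ u, LocallyConvexSpace ℝ (Y u)] [∀ u, T2Space (Y u)]

/-- The robust objective `p := sup_{u ∈ U} F_u (·, 0_u)`. -/
def pRob (F : ∀ u, X × Y u → EReal) (x : X) : EReal := ⨆ u, F u (x, 0)

/-- `q := inf over u ∈ U and y* ∈ Y_u* of F_u*(·, y*)`. -/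
def qRob (F : ∀ u, X × Y u → EReal) (xs : X →L[ℝ] ℝ) : EReal :=
  ⨅ (u : U) (ys : Y u →L[ℝ] ℝ), conj2 (F u) xs ys

/-- `S^ε(x*) := {x : p x ∈ ℝ ∧ p x - ⟨x*, x⟩ ≤ -q x* + ε}`. -/
def Sset (F : ∀ u, X × Y u → EReal) (ε : ℝ) (xs : X →L[ℝ] ℝ) : Set X :=
  {x | (∃ r : ℝ, pRob F x = (r : EReal)) ∧
    pRob F x - ((xs x : ℝ) : EReal) ≤ -qRob F xs + (ε : EReal)}

/-- `J^ε(u) := {x : p x ∈ ℝ ∧ p x ≤ F_u(x, 0) + ε}`. -/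
def Jset (F : ∀ u, X × Y u → EReal) (ε : ℝ) (u : U) : Set X :=
  {x | (∃ r : ℝ, pRob F x = (r : EReal)) ∧ pRob F x ≤ F u (x, 0) + (ε : EReal)}

/-- `A^{(ε₁,ε₂)}_{(u,y*)}(x*) := {x ∈ J^{ε₁}(u) : (x, 0) ∈ (M^{ε₂}F_u)(x*, y*)}`. -/
def Aset (F : ∀ u, X × Y u → EReal) (ε₁ ε₂ : ℝ) (u : U) (ys : Y u →L[ℝ] ℝ)
    (xs : X →L[ℝ] ℝ) : Set X :=
  {x | x ∈ Jset F ε₁ u ∧ (x, (0 : Y u)) ∈ M2 (F u) ε₂ xs ys}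

/-- `𝒜^ε(x*)`. -/
def calA (F : ∀ u, X × Y u → EReal) (ε : ℝ) (xs : X →L[ℝ] ℝ) : Set X :=
  ⋂ (η : ℝ) (_ : 0 < η),
    ⋃ (u : U) (ys : Y u →L[ℝ] ℝ) (ε₁ : ℝ) (ε₂ : ℝ)
      (_ : 0 ≤ ε₁) (_ : 0 ≤ ε₂) (_ : ε₁ + ε₂ = ε + η), Aset F ε₁ ε₂ u ys xs

/-- `B^ε_{(u,y*)}(x*)`. -/
def Bset (F : ∀ u, X × Y u → EReal) (ε : ℝ) (u : U) (ys : Y u →L[ℝ] ℝ)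
    (xs : X →L[ℝ] ℝ) : Set X :=
  ⋃ (ε₁ : ℝ) (ε₂ : ℝ) (_ : 0 ≤ ε₁) (_ : 0 ≤ ε₂) (_ : ε₁ + ε₂ = ε),
    Aset F ε₁ ε₂ u ys xs

/-- `B^ε(x*) := ⋃_{u, y*} B^ε_{(u,y*)}(x*)`. -/
def BsetAll (F : ∀ u, X × Y u → EReal) (ε : ℝ) (xs : X →L[ℝ] ℝ) : Set X :=
  ⋃ (u : U) (ys : Y u →L[ℝ] ℝ), Bset F ε u ys xs

/-- `I^ε(x)`: the set of `ε`-active indices at `x`. -/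
def Iset (F : ∀ u, X × Y u → EReal) (ε : ℝ) (x : X) : Set U :=
  {u | (∃ r : ℝ, pRob F x = (r : EReal)) ∧ pRob F x - (ε : EReal) ≤ F u (x, 0)}

/-- `C^ε(x)`. -/
def Cset (F : ∀ u, X × Y u → EReal) (ε : ℝ) (x : X) : Set (X →L[ℝ] ℝ) :=
  ⋂ (η : ℝ) (_ : 0 < η),
    ⋃ (ε₁ : ℝ) (ε₂ : ℝ) (_ : 0 ≤ ε₁) (_ : 0 ≤ ε₂) (_ : ε₁ + ε₂ = ε + η)
      (u : U) (_ : u ∈ Iset F ε₁ x),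
      Prod.fst '' epsSubdiff2 (F u) ε₂ (x, (0 : Y u))

/-- `D^ε(x)`. -/
def Dset (F : ∀ u, X × Y u → EReal) (ε : ℝ) (x : X) : Set (X →L[ℝ] ℝ) :=
  ⋃ (ε₁ : ℝ) (ε₂ : ℝ) (_ : 0 ≤ ε₁) (_ : 0 ≤ ε₂) (_ : ε₁ + ε₂ = ε)
    (u : U) (_ : u ∈ Iset F ε₁ x),
    Prod.fst '' epsSubdiff2 (F u) ε₂ (x, (0 : Y u))

/-- The exact active index set `I(x) := {u : F_u(x,0) = p(x)}` (when `p(x) ∈ ℝ`). -/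
def I0set (F : ∀ u, X × Y u → EReal) (x : X) : Set U :=
  {u | (∃ r : ℝ, pRob F x = (r : EReal)) ∧ F u (x, 0) = pRob F x}

/-- `D(x) := ⋃_{u ∈ I(x)} proj_{X*} ∂F_u(x, 0)`. -/
def D0set (F : ∀ u, X × Y u → EReal) (x : X) : Set (X →L[ℝ] ℝ) :=
  ⋃ (u : U) (_ : u ∈ I0set F x), Prod.fst '' epsSubdiff2 (F u) 0 (x, (0 : Y u))

/-- `B_{(u,y*)}(x*) := {x ∈ J(u) : (x, 0) ∈ (M F_u)(x*, y*)}`. -/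
def B0set (F : ∀ u, X × Y u → EReal) (u : U) (ys : Y u →L[ℝ] ℝ)
    (xs : X →L[ℝ] ℝ) : Set X :=
  {x | (∃ r : ℝ, pRob F x = (r : EReal)) ∧ F u (x, 0) = pRob F x ∧
    (x, (0 : Y u)) ∈ M2 (F u) 0 xs ys}

section

omit [IsTopologicalAddGroup X] [ContinuousSMul ℝ X] [LocallyConvexSpace ℝ X] [T2Space X]
  [∀ u, IsTopologicalAddGroup (Y u)] [∀ u, ContinuousSMul ℝ (Y u)]
  [∀ u, LocallyConvexSpace ℝ (Y u)] [∀ u, T2Space (Y u)]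

lemma coe_sub_le_coe_iff (l c : ℝ) (g : EReal) :
    (l : EReal) - g ≤ c ↔ ((l - c : ℝ) : EReal) ≤ g := by
  rw [EReal.sub_le_iff_le_add (Or.inr (EReal.coe_ne_top c)) (Or.inr (EReal.coe_ne_bot c)),
    EReal.coe_sub, EReal.sub_le_iff_le_add (Or.inl (EReal.coe_ne_bot c))
      (Or.inl (EReal.coe_ne_top c)), add_comm]

lemma iSup_coe_sub_le_coe_iff {Z : Type*} (l : Z → ℝ) (g : Z → EReal) (c : ℝ) :
    ⨆ z, (l z : EReal) - g z ≤ c ↔ ∀ z, ((l z - c : ℝ) : EReal) ≤ g z := by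
  simp only [iSup_le_iff, coe_sub_le_coe_iff]

lemma mem_epsSubdiff1_iff_conj1_le {h : X → EReal} {a : X} {r : ℝ} (ha : h a = r) {ε : ℝ}
    {xs : X →L[ℝ] ℝ} :
    xs ∈ epsSubdiff1 h ε a ↔ conj1 h xs ≤ ((xs a - r + ε : ℝ) : EReal) := by
  rw [conj1, iSup_coe_sub_le_coe_iff, epsSubdiff1, Set.mem_ofPred_eq, ha,
    and_iff_right ⟨r, rfl⟩]
  refine forall_congr' fun z => ?_
  rw [← EReal.coe_add, show r + (xs z - xs a - ε) = xs z - (xs a - r + ε) by ring]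

lemma coe_sub_le_conj1 {h : X → EReal} {a : X} {r : ℝ} (ha : h a = r) (xs : X →L[ℝ] ℝ) :
    ((xs a - r : ℝ) : EReal) ≤ conj1 h xs := by
  rw [EReal.coe_sub, ← ha]
  exact le_iSup (fun z => ((xs z : ℝ) : EReal) - h z) a

lemma sub_eq_iInf_sub_of_mem_epsSubdiff1 {h : X → EReal} {a : X} {xs : X →L[ℝ] ℝ}
    (hxs : xs ∈ epsSubdiff1 h 0 a) :
    h a - ((xs a : ℝ) : EReal) = ⨅ z, h z - ((xs z : ℝ) : EReal) := by
  refine le_antisymm (le_iInf fun z => ?_) (iInf_le _ a)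
  obtain ⟨⟨r, hr⟩, hle⟩ := hxs
  rw [EReal.le_sub_iff_add_le (Or.inl (EReal.coe_ne_bot _)) (Or.inl (EReal.coe_ne_top _))]
  calc h a - ((xs a : ℝ) : EReal) + ((xs z : ℝ) : EReal)
      = h a + ((xs z - xs a - 0 : ℝ) : EReal) := by
        rw [hr]; norm_cast; ring
    _ ≤ h z := hle z

section Pair

variable {Yu : Type*} [AddCommGroup Yu] [Module ℝ Yu] [TopologicalSpace Yu]

lemma mem_epsSubdiff2_iff_conj2_le {G : X × Yu → EReal} {a : X × Yu} {c : ℝ} (ha : G a = c)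
    {ε : ℝ} {zs : (X →L[ℝ] ℝ) × (Yu →L[ℝ] ℝ)} :
    zs ∈ epsSubdiff2 G ε a ↔
      conj2 G zs.1 zs.2 ≤ ((zs.1 a.1 + zs.2 a.2 - c + ε : ℝ) : EReal) := by
  rw [conj2, iSup_coe_sub_le_coe_iff, epsSubdiff2, Set.mem_ofPred_eq, ha,
    and_iff_right ⟨c, rfl⟩]
  refine forall_congr' fun z => ?_
  rw [← EReal.coe_add, show c + (zs.1 z.1 + zs.2 z.2 - zs.1 a.1 - zs.2 a.2 - ε) =
    zs.1 z.1 + zs.2 z.2 - (zs.1 a.1 + zs.2 a.2 - c + ε) by ring]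

end Pair

lemma conj1_pRob_le_qRob (F : ∀ u, X × Y u → EReal) (xs : X →L[ℝ] ℝ) :
    conj1 (pRob F) xs ≤ qRob F xs := by
  refine le_iInf₂ fun u ys => iSup_le fun z => ?_
  calc ((xs z : ℝ) : EReal) - pRob F z ≤ ((xs z : ℝ) : EReal) - F u (z, 0) :=
        EReal.sub_le_sub le_rfl (le_iSup (fun u => F u (z, 0)) u)
    _ ≤ conj2 (F u) xs ys := by
        refine le_trans (le_of_eq ?_)
          (le_iSup (fun w : X × Y u => ((xs w.1 + ys w.2 : ℝ) : EReal) - F u w) (z, 0))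
        simp

lemma qRob_le_coe_iff {F : ∀ u, X × Y u → EReal} {xs : X →L[ℝ] ℝ} {c : ℝ} :
    qRob F xs ≤ c ↔
      ∀ η > 0, ∃ u, ∃ ys : Y u →L[ℝ] ℝ, conj2 (F u) xs ys ≤ ((c + η : ℝ) : EReal) := by
  constructor
  · intro h η hη
    have hlt : qRob F xs < ((c + η : ℝ) : EReal) :=
      h.trans_lt (EReal.coe_lt_coe_iff.2 (lt_add_of_pos_right c hη))
    obtain ⟨u, hu⟩ := iInf_lt_iff.1 hlt
    obtain ⟨ys, hys⟩ := iInf_lt_iff.1 hu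
    exact ⟨u, ys, hys.le⟩
  · intro h
    refine EReal.le_of_forall_lt_iff_le.1 fun z hz => ?_
    obtain ⟨u, ys, hle⟩ := h (z - c) (sub_pos.2 (EReal.coe_lt_coe_iff.1 hz))
    rw [add_sub_cancel] at hle
    exact (iInf_le _ u).trans ((iInf_le _ ys).trans hle)

variable {F : ∀ u, X × Y u → EReal} {x : X} {r : ℝ} {xs : X →L[ℝ] ℝ}

lemma conj2_le_of_mem_Iset (hr : pRob F x = r) {u : U} {ys : Y u →L[ℝ] ℝ} {ε₁ ε₂ : ℝ}
    (hu : u ∈ Iset F ε₁ x) (hs : (xs, ys) ∈ epsSubdiff2 (F u) ε₂ (x, 0)) :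
    conj2 (F u) xs ys ≤ ((xs x - r + (ε₁ + ε₂) : ℝ) : EReal) := by
  obtain ⟨c, hc⟩ := hs.1
  have hcr : r - ε₁ ≤ c := by
    have := hu.2
    rwa [hr, hc, ← EReal.coe_sub, EReal.coe_le_coe_iff] at this
  refine ((mem_epsSubdiff2_iff_conj2_le hc).1 hs).trans (EReal.coe_le_coe_iff.2 ?_)
  simp only [map_zero]
  linarith

lemma mem_Iset_and_mem_epsSubdiff2_of_conj2_le (hr : pRob F x = r) {u : U} {ys : Y u →L[ℝ] ℝ}
    {ε : ℝ}
    (h : conj2 (F u) xs ys ≤ ((xs x - r + ε : ℝ) : EReal)) :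
    u ∈ Iset F ε x ∧ (xs, ys) ∈ epsSubdiff2 (F u) ε (x, 0) := by
  have hup : F u (x, 0) ≤ r := hr ▸ le_iSup (fun u => F u (x, 0)) u
  have hlow : ((r - ε : ℝ) : EReal) ≤ F u (x, 0) := by
    have := (iSup_coe_sub_le_coe_iff _ _ _).1 h (x, 0)
    rwa [show xs (x, 0).1 + ys (x, 0).2 - (xs x - r + ε) = r - ε by
      simp only [map_zero, add_zero]; ring] at this
  set c := (F u (x, 0)).toReal
  have hc : F u (x, 0) = c :=
    (EReal.coe_toReal (hup.trans_lt (EReal.coe_lt_top r)).ne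
      ((EReal.bot_lt_coe _).trans_le hlow).ne').symm
  refine ⟨⟨⟨r, hr⟩, by rwa [hr, ← EReal.coe_sub]⟩, (mem_epsSubdiff2_iff_conj2_le hc).2 ?_⟩
  refine h.trans (EReal.coe_le_coe_iff.2 ?_)
  have : c ≤ r := by rwa [hc, EReal.coe_le_coe_iff] at hup
  simp only [map_zero]
  linarith

lemma mem_Cset_iff (hr : pRob F x = r) :
    xs ∈ Cset F 0 x ↔ qRob F xs ≤ ((xs x - r : ℝ) : EReal) := by
  rw [qRob_le_coe_iff]
  simp only [Cset, Set.mem_iInter, Set.mem_iUnion, zero_add]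
  constructor
  · intro h η hη
    obtain ⟨ε₁, ε₂, -, -, hsum, u, hu, ⟨xs', ys⟩, hs, rfl⟩ := h η hη
    exact ⟨u, ys, hsum ▸ conj2_le_of_mem_Iset hr hu hs⟩
  · intro h η hη
    obtain ⟨u, ys, hle⟩ := h (η / 2) (half_pos hη)
    obtain ⟨hu, hs⟩ := mem_Iset_and_mem_epsSubdiff2_of_conj2_le hr hle
    exact ⟨η / 2, η / 2, (half_pos hη).le, (half_pos hη).le, add_halves η, u, hu, _, hs, rfl⟩

end

theorem subdiff_eq_Cset_iff_general
    (F : ∀ u, X × Y u → EReal)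
    (x : X) (hx : ∃ r : ℝ, pRob F x = (r : EReal)) :
    List.TFAE
      [epsSubdiff1 (pRob F) 0 x = Cset F 0 x,
       ∀ xs ∈ epsSubdiff1 (pRob F) 0 x,
         (∃ xbar : X, pRob F xbar - ((xs xbar : ℝ) : EReal) =
            ⨅ z : X, (pRob F z - ((xs z : ℝ) : EReal))) ∧
         conj1 (pRob F) xs = qRob F xs,
       ∀ xs ∈ epsSubdiff1 (pRob F) 0 x, conj1 (pRob F) xs = qRob F xs] := by
  obtain ⟨r, hr⟩ := hx
  have hsub : ∀ xs, xs ∈ epsSubdiff1 (pRob F) 0 x ↔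
      conj1 (pRob F) xs ≤ ((xs x - r : ℝ) : EReal) := fun xs => by
    simpa using mem_epsSubdiff1_iff_conj1_le (ε := 0) (xs := xs) hr
  tfae_have 1 → 3 := fun h xs hxs =>
    le_antisymm (conj1_pRob_le_qRob F xs)
      (((mem_Cset_iff hr).1 (h ▸ hxs)).trans (coe_sub_le_conj1 hr xs))
  tfae_have 3 → 1 := fun h => Set.ext fun xs =>
    ⟨fun hxs => (mem_Cset_iff hr).2 (h xs hxs ▸ (hsub xs).1 hxs),
     fun hxs => (hsub xs).2 ((conj1_pRob_le_qRob F xs).trans ((mem_Cset_iff hr).1 hxs))⟩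
  tfae_have 2 → 3 := fun h xs hxs => (h xs hxs).2
  tfae_have 3 → 2 := fun h xs hxs => ⟨⟨x, sub_eq_iInf_sub_of_mem_epsSubdiff1 hxs⟩, h xs hxs⟩
  tfae_finish

/-- Theorem 8.1. -/
theorem subdiff_eq_Cset_iff
    (F : ∀ u, X × Y u → EReal) (hU : Nonempty U) (hF : ∀ u z, F u z ≠ ⊥)
    (x : X) (hx : ∃ r : ℝ, pRob F x = (r : EReal)) :
    List.TFAE
      [epsSubdiff1 (pRob F) 0 x = Cset F 0 x,
       ∀ xs ∈ epsSubdiff1 (pRob F) 0 x,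
         (∃ xbar : X, pRob F xbar - ((xs xbar : ℝ) : EReal) =
            ⨅ z : X, (pRob F z - ((xs z : ℝ) : EReal))) ∧
         conj1 (pRob F) xs = qRob F xs,
       ∀ xs ∈ epsSubdiff1 (pRob F) 0 x, conj1 (pRob F) xs = qRob F xs] :=
  subdiff_eq_Cset_iff_general F x hx

end RobustDuality
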